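/- Let ℓ ≥ 1 and let u be a finite mass solution of the coagulation-with-emission equations on [0,T] with large initial conditions, i.e. u_i(0) = 0 for every i ≤ ℓ. Then u_i(t) = 0 for every i ≤ ℓ and every t ∈ [0,T] (no spontaneous generation of small clusters). -/

import Mathlib

open Finset Filter Topology

noncomputable section

/-- Total reaction probability mass
`M(t) = ∑_{m,n ≥ 1, m+n ≥ ℓ+1} m n u_m(t) u_n(t)`. -/
def Mfun (ℓ : ℕ) (u : ℕ → ℝ → ℝ) (t : ℝ) : ℝ :=
  ∑' p : ℕ × ℕ,
    if 1 ≤ p.1 ∧ 1 ≤ p.2 ∧ ℓ + 1 ≤ p.1 + p.2 then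
      (p.1 : ℝ) * (p.2 : ℝ) * u p.1 t * u p.2 t
    else 0

/-- Right-hand side of the coagulation-with-emission equation for `u n`:
`(1/M)[∑_{i=1}^{n+ℓ−1} i(n+ℓ−i) u_i u_{n+ℓ−i} − 2 n u_n ∑_{i ≥ max(1, ℓ−n+1)} i u_i]`. -/
def coagRHS (ℓ : ℕ) (u : ℕ → ℝ → ℝ) (n : ℕ) (t : ℝ) : ℝ :=
  (1 / Mfun ℓ u t) *
    ((∑ i ∈ Finset.Icc 1 (n + ℓ - 1),
        (i : ℝ) * ((n + ℓ - i : ℕ) : ℝ) * u i t * u (n + ℓ - i) t)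
      - 2 * (n : ℝ) * u n t *
          (∑' i : ℕ, if max 1 (ℓ + 1 - n) ≤ i then (i : ℝ) * u i t else 0))

/-- `u` is a (C¹) solution of the coagulation-with-emission equations on `[0,T]`,
with `M > 0` on `[0,T]` and nonnegative initial data summing to `1`. -/
structure IsCoagSolution (ℓ : ℕ) (T : ℝ) (u : ℕ → ℝ → ℝ) : Prop where
  contDiff : ∀ n, 1 ≤ n → ContDiffOn ℝ 1 (u n) (Set.Icc 0 T)
  Msummable : ∀ t ∈ Set.Icc (0 : ℝ) T,
    Summable (fun p : ℕ × ℕ =>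
      if 1 ≤ p.1 ∧ 1 ≤ p.2 ∧ ℓ + 1 ≤ p.1 + p.2 then
        (p.1 : ℝ) * (p.2 : ℝ) * u p.1 t * u p.2 t
      else 0)
  Mpos : ∀ t ∈ Set.Icc (0 : ℝ) T, 0 < Mfun ℓ u t
  ode : ∀ n, 1 ≤ n → ∀ t ∈ Set.Icc (0 : ℝ) T,
    HasDerivWithinAt (u n) (coagRHS ℓ u n t) (Set.Icc 0 T) t
  init_nonneg : ∀ n, 1 ≤ n → 0 ≤ u n 0
  init_sum : HasSum (fun i : ℕ => if 1 ≤ i then u i 0 else 0) 1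

/-- A finite mass solution: a nonnegative solution whose first-moment series
`m₁(t) = ∑_{i ≥ 1} i u_i(t)` converges uniformly on `[0,T]`. -/
structure IsFiniteMassSolution (ℓ : ℕ) (T : ℝ) (u : ℕ → ℝ → ℝ)
    extends IsCoagSolution ℓ T u : Prop where
  nonneg : ∀ n, 1 ≤ n → ∀ t ∈ Set.Icc (0 : ℝ) T, 0 ≤ u n t
  m1_unif : TendstoUniformlyOn
    (fun N t => ∑ i ∈ Finset.range N, (i : ℝ) * u i t)
    (fun t => ∑' i : ℕ, (i : ℝ) * u i t) atTop (Set.Icc 0 T)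

/-!
The density `F = u₁ + ⋯ + u_ℓ` of small clusters obeys a linear differential inequality
`F' ≤ K F`. Loss terms only decrease `F`, and in every gain term `i (n+ℓ-i) uᵢ u_{n+ℓ-i}` with
`n ≤ ℓ` the two sizes add up to at most `2ℓ`, so one of them is at most `ℓ`: the term is bounded
by `F` times a bound of the finitely many continuous `u_j`, `j ≤ 2ℓ`, on `[0,T]`. The prefactor
`1/M` is bounded because `M`, a series of nonnegative continuous functions, is lower
semicontinuous and thus attains a positive minimum on `[0,T]`. As `F(0) = 0` and `F ≥ 0`,
Grönwall's inequality gives `F ≡ 0`.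
-/

theorem le_zero_of_hasDerivWithinAt_le_mul_self {f f' : ℝ → ℝ} {K a b : ℝ}
    (hf : ∀ x ∈ Set.Icc a b, HasDerivWithinAt f (f' x) (Set.Icc a b) x) (ha : f a ≤ 0)
    (bound : ∀ x ∈ Set.Icc a b, f' x ≤ K * f x) :
    ∀ x ∈ Set.Icc a b, f x ≤ 0 := by
  intro x hx
  calc f x ≤ gronwallBound 0 K 0 (x - a) := by
        refine le_gronwallBound_of_liminf_deriv_right_le
          (fun y hy => (hf y hy).continuousWithinAt) (fun y hy r hr => ?_) ha
          (fun y hy => by simpa using bound y (Set.Ico_subset_Icc_self hy)) x hx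
        exact ((hf y (Set.Ico_subset_Icc_self hy)).mono_of_mem_nhdsWithin
          (Icc_mem_nhdsGE_of_mem hy)).liminf_right_slope_le hr
    _ = 0 := gronwallBound_ε0_δ0 K _

theorem lowerSemicontinuousOn_tsum_of_nonneg {ι X : Type*} [TopologicalSpace X]
    {f : ι → X → ℝ} {s : Set X} (hcont : ∀ i, ContinuousOn (f i) s)
    (hnonneg : ∀ i, ∀ x ∈ s, 0 ≤ f i x) (hsum : ∀ x ∈ s, Summable fun i => f i x) :
    LowerSemicontinuousOn (fun x => ∑' i, f i x) s := by
  intro x hx y hy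
  obtain ⟨S, hS⟩ := ((hsum x hx).hasSum.eventually (Ioi_mem_nhds hy)).exists
  have hcontS : ContinuousWithinAt (fun x => ∑ i ∈ S, f i x) s x :=
    continuousOn_finsetSum S (fun i _ => hcont i) x hx
  filter_upwards [hcontS.eventually (Ioi_mem_nhds hS), self_mem_nhdsWithin] with x' hx' hx's
  exact lt_of_lt_of_le hx' ((hsum x' hx's).sum_le_tsum S fun i _ => hnonneg i x' hx's)

theorem IsCompact.exists_forall_le_of_continuousOn {ι X : Type*} [TopologicalSpace X]
    {K : Set X} (hK : IsCompact K) (S : Finset ι) {f : ι → X → ℝ}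
    (hf : ∀ i ∈ S, ContinuousOn (f i) K) : ∃ B, ∀ i ∈ S, ∀ x ∈ K, f i x ≤ B := by
  obtain ⟨B, hB⟩ := hK.exists_bound_of_continuousOn (f := fun x (i : S) => f i x)
    (continuousOn_pi.2 fun i => hf i i.2)
  exact ⟨B, fun i hi x hx =>
    (le_abs_self _).trans ((norm_le_pi_norm (fun j : S => f j x) ⟨i, hi⟩).trans (hB x hx))⟩

def smallDensity (ℓ : ℕ) (u : ℕ → ℝ → ℝ) (t : ℝ) : ℝ :=
  ∑ n ∈ Finset.Icc 1 ℓ, u n t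

def coagGain (ℓ : ℕ) (u : ℕ → ℝ → ℝ) (n : ℕ) (t : ℝ) : ℝ :=
  ∑ i ∈ Finset.Icc 1 (n + ℓ - 1), (i : ℝ) * ((n + ℓ - i : ℕ) : ℝ) * u i t * u (n + ℓ - i) t

section FixedTime

variable {ℓ : ℕ} {u : ℕ → ℝ → ℝ} {t : ℝ}

theorem le_smallDensity (hu : ∀ n, 1 ≤ n → 0 ≤ u n t) {i : ℕ} (hi : 1 ≤ i) (hiℓ : i ≤ ℓ) :
    u i t ≤ smallDensity ℓ u t :=
  Finset.single_le_sum (fun n hn => hu n (Finset.mem_Icc.1 hn).1) (Finset.mem_Icc.2 ⟨hi, hiℓ⟩)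

theorem smallDensity_nonneg (hu : ∀ n, 1 ≤ n → 0 ≤ u n t) : 0 ≤ smallDensity ℓ u t :=
  Finset.sum_nonneg fun n hn => hu n (Finset.mem_Icc.1 hn).1

theorem coagGain_nonneg (hu : ∀ n, 1 ≤ n → 0 ≤ u n t) (n : ℕ) : 0 ≤ coagGain ℓ u n t := by
  refine Finset.sum_nonneg fun i hi => ?_
  have := hu i (Finset.mem_Icc.1 hi).1
  have := hu (n + ℓ - i) (by grind)
  positivity

theorem coagRHS_le_coagGain_div (hu : ∀ n, 1 ≤ n → 0 ≤ u n t) (hM : 0 < Mfun ℓ u t) (n : ℕ) :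
    coagRHS ℓ u n t ≤ coagGain ℓ u n t / Mfun ℓ u t := by
  have hloss : 0 ≤ ∑' i : ℕ, if max 1 (ℓ + 1 - n) ≤ i then (i : ℝ) * u i t else 0 :=
    tsum_nonneg fun i => by
      split_ifs with hi
      · exact mul_nonneg i.cast_nonneg (hu i (le_of_max_le_left hi))
      · exact le_rfl
  have hn : 0 ≤ 2 * (n : ℝ) * u n t := by
    rcases n.eq_zero_or_pos with rfl | hn
    · simp
    · have := hu n hn
      positivity
  rw [coagRHS, one_div_mul_eq_div]
  gcongr
  exact sub_le_self _ (mul_nonneg hn hloss)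

theorem mul_mul_le_smallDensity_mul {B : ℝ} (hu : ∀ n, 1 ≤ n → 0 ≤ u n t)
    (hB : ∀ j, 1 ≤ j → j ≤ 2 * ℓ → u j t ≤ B) {a b : ℕ} (ha : 1 ≤ a) (haℓ : a ≤ ℓ) (hb : 1 ≤ b)
    (hbℓ : b ≤ 2 * ℓ) :
    (a : ℝ) * b * u a t * u b t ≤ (2 * ℓ) ^ 2 * (smallDensity ℓ u t * B) := by
  have hFa := le_smallDensity hu ha haℓ
  have hBb := hB b hb hbℓ
  have hua := hu a ha
  have hub := hu b hb
  have := smallDensity_nonneg (ℓ := ℓ) hu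
  have ha' : (a : ℝ) ≤ 2 * ℓ := by exact_mod_cast (by omega : a ≤ 2 * ℓ)
  have hb' : (b : ℝ) ≤ 2 * ℓ := by exact_mod_cast hbℓ
  calc (a : ℝ) * b * u a t * u b t = (a * u a t) * (b * u b t) := by ring
    _ ≤ (2 * ℓ * smallDensity ℓ u t) * (2 * ℓ * B) := by gcongr
    _ = (2 * ℓ) ^ 2 * (smallDensity ℓ u t * B) := by ring

theorem coagGain_le {B : ℝ} (hu : ∀ n, 1 ≤ n → 0 ≤ u n t)
    (hB : ∀ j, 1 ≤ j → j ≤ 2 * ℓ → u j t ≤ B) {n : ℕ} (hnℓ : n ≤ ℓ) :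
    coagGain ℓ u n t ≤ 8 * ℓ ^ 3 * B * smallDensity ℓ u t := by
  have hterm : ∀ i ∈ Finset.Icc 1 (n + ℓ - 1),
      (i : ℝ) * ((n + ℓ - i : ℕ) : ℝ) * u i t * u (n + ℓ - i) t
        ≤ (2 * ℓ) ^ 2 * (smallDensity ℓ u t * B) := by
    intro i hi
    obtain ⟨hi1, hi2⟩ := Finset.mem_Icc.1 hi
    by_cases hiℓ : i ≤ ℓ
    · exact mul_mul_le_smallDensity_mul hu hB hi1 hiℓ (by omega) (by omega)
    · rw [mul_comm (i : ℝ), mul_right_comm _ (u i t)]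
      exact mul_mul_le_smallDensity_mul hu hB (by omega) (by omega) hi1 (by omega)
  have hcard : ((Finset.Icc 1 (n + ℓ - 1)).card : ℝ) ≤ 2 * ℓ := by
    rw [Nat.card_Icc]
    exact_mod_cast (by omega : n + ℓ - 1 + 1 - 1 ≤ 2 * ℓ)
  have hc : 0 ≤ (2 * (ℓ : ℝ)) ^ 2 * (smallDensity ℓ u t * B) := by
    rcases ℓ.eq_zero_or_pos with rfl | hℓ
    · simp
    · have := (hu 1 le_rfl).trans (hB 1 le_rfl (by omega))
      have := smallDensity_nonneg (ℓ := ℓ) hu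
      positivity
  calc coagGain ℓ u n t
      ≤ (Finset.Icc 1 (n + ℓ - 1)).card * ((2 * ℓ) ^ 2 * (smallDensity ℓ u t * B)) :=
        (Finset.sum_le_card_nsmul _ _ _ hterm).trans_eq (nsmul_eq_mul _ _)
    _ ≤ 2 * ℓ * ((2 * ℓ) ^ 2 * (smallDensity ℓ u t * B)) := by gcongr
    _ = 8 * ℓ ^ 3 * B * smallDensity ℓ u t := by ring

theorem sum_coagRHS_le {B δ : ℝ} (hu : ∀ n, 1 ≤ n → 0 ≤ u n t)
    (hB : ∀ j, 1 ≤ j → j ≤ 2 * ℓ → u j t ≤ B) (hδ : 0 < δ) (hM : δ ≤ Mfun ℓ u t) :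
    ∑ n ∈ Finset.Icc 1 ℓ, coagRHS ℓ u n t ≤ 8 * ℓ ^ 4 * B / δ * smallDensity ℓ u t := by
  have hn : ∀ n ∈ Finset.Icc 1 ℓ, coagRHS ℓ u n t ≤ 8 * ℓ ^ 3 * B * smallDensity ℓ u t / δ := by
    intro n hn
    calc coagRHS ℓ u n t
        ≤ coagGain ℓ u n t / Mfun ℓ u t := coagRHS_le_coagGain_div hu (hδ.trans_le hM) n
      _ ≤ coagGain ℓ u n t / δ := div_le_div_of_nonneg_left (coagGain_nonneg hu n) hδ hM
      _ ≤ 8 * ℓ ^ 3 * B * smallDensity ℓ u t / δ := by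
        gcongr
        exact coagGain_le hu hB (Finset.mem_Icc.1 hn).2
  calc ∑ n ∈ Finset.Icc 1 ℓ, coagRHS ℓ u n t
      ≤ (Finset.Icc 1 ℓ).card * (8 * ℓ ^ 3 * B * smallDensity ℓ u t / δ) :=
        (Finset.sum_le_card_nsmul _ _ _ hn).trans_eq (nsmul_eq_mul _ _)
    _ = 8 * ℓ ^ 4 * B / δ * smallDensity ℓ u t := by
        rw [Nat.card_Icc, Nat.add_sub_cancel]
        ring

end FixedTime

namespace IsCoagSolution

variable {ℓ : ℕ} {T : ℝ} {u : ℕ → ℝ → ℝ}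

theorem exists_pos_le_Mfun (hu : IsCoagSolution ℓ T u)
    (hnonneg : ∀ n, 1 ≤ n → ∀ t ∈ Set.Icc 0 T, 0 ≤ u n t) :
    ∃ δ > 0, ∀ t ∈ Set.Icc 0 T, δ ≤ Mfun ℓ u t := by
  rcases (Set.Icc 0 T).eq_empty_or_nonempty with hempty | hne
  · exact ⟨1, one_pos, by simp [hempty]⟩
  have hlsc : LowerSemicontinuousOn (Mfun ℓ u) (Set.Icc 0 T) := by
    refine lowerSemicontinuousOn_tsum_of_nonneg (fun p => ?_) (fun p t ht => ?_) hu.Msummable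
    · split_ifs with hp
      · exact ((continuousOn_const.mul (hu.contDiff _ hp.1).continuousOn).mul
          (hu.contDiff _ hp.2.1).continuousOn)
      · exact continuousOn_const
    · split_ifs with hp
      · have := hnonneg _ hp.1 t ht
        have := hnonneg _ hp.2.1 t ht
        positivity
      · exact le_rfl
  obtain ⟨t₀, ht₀, hmin⟩ := hlsc.exists_isMinOn hne isCompact_Icc
  exact ⟨Mfun ℓ u t₀, hu.Mpos t₀ ht₀, fun t ht => hmin ht⟩

theorem hasDerivWithinAt_smallDensity (hu : IsCoagSolution ℓ T u) {t : ℝ} (ht : t ∈ Set.Icc 0 T) :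
    HasDerivWithinAt (smallDensity ℓ u) (∑ n ∈ Finset.Icc 1 ℓ, coagRHS ℓ u n t)
      (Set.Icc 0 T) t :=
  HasDerivWithinAt.fun_sum fun n hn => hu.ode n (Finset.mem_Icc.1 hn).1 t ht

end IsCoagSolution

theorem no_spontaneous_generation_small_general (ℓ : ℕ) (T : ℝ)
    (u : ℕ → ℝ → ℝ) (hu : IsFiniteMassSolution ℓ T u)
    (hlarge : ∀ i, 1 ≤ i → i ≤ ℓ → u i 0 = 0) :
    ∀ i, 1 ≤ i → i ≤ ℓ → ∀ t ∈ Set.Icc (0 : ℝ) T, u i t = 0 := by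
  obtain ⟨δ, hδ, hM⟩ := hu.exists_pos_le_Mfun hu.nonneg
  obtain ⟨B, hB⟩ := isCompact_Icc.exists_forall_le_of_continuousOn (Finset.Icc 1 (2 * ℓ))
    fun j hj => (hu.contDiff j (Finset.mem_Icc.1 hj).1).continuousOn
  have hsmall : ∀ t ∈ Set.Icc 0 T, smallDensity ℓ u t ≤ 0 :=
    le_zero_of_hasDerivWithinAt_le_mul_self (fun t ht => hu.hasDerivWithinAt_smallDensity ht)
      (Finset.sum_eq_zero fun n hn => hlarge n (Finset.mem_Icc.1 hn).1 (Finset.mem_Icc.1 hn).2).le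
      fun t ht => sum_coagRHS_le (fun n hn => hu.nonneg n hn t ht)
        (fun j hj hjℓ => hB j (Finset.mem_Icc.2 ⟨hj, hjℓ⟩) t ht) hδ (hM t ht)
  intro i hi hiℓ t ht
  exact le_antisymm ((le_smallDensity (fun n hn => hu.nonneg n hn t ht) hi hiℓ).trans (hsmall t ht))
    (hu.nonneg i hi t ht)

/-- no spontaneous generation of small clusters. For `ℓ ≥ 1` and a
finite mass solution on `[0,T]` with large initial conditions (`u_i(0) = 0` for
`1 ≤ i ≤ ℓ`), one has `u_i(t) = 0` for all `1 ≤ i ≤ ℓ` and `t ∈ [0,T]`. -/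
theorem no_spontaneous_generation_small (ℓ : ℕ) (hℓ : 1 ≤ ℓ) (T : ℝ) (hT : 0 < T)
    (u : ℕ → ℝ → ℝ) (hu : IsFiniteMassSolution ℓ T u)
    (hlarge : ∀ i, 1 ≤ i → i ≤ ℓ → u i 0 = 0) :
    ∀ i, 1 ≤ i → i ≤ ℓ → ∀ t ∈ Set.Icc (0 : ℝ) T, u i t = 0 :=
  no_spontaneous_generation_small_general ℓ T u hu hlarge
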